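/- arXiv:1301.1555 — 2 statements merged into one kernel-verified Lean document; each statement's English description precedes it below -/
import Mathlib

section
/- Let $e \ge 1$ be an integer, let $(\rho_j)_{j=1}^{N}$ be nonnegative reals with $\sum_{j=1}^{N}\rho_j = 1$, define $\rho(x)=\sum_{j=1}^{N}\rho_j x^{j-1}$ and $g(z)=1-\sum_{i=0}^{e-1}\frac{z^i}{i!}\,\rho^{(i)}(1-z)$. Then $g$ is monotonically nondecreasing on the interval $[0,1]$. -/
/-!
Write `e = n + 1`. The sum in `g(z)` is the degree-`n` Taylor polynomial of `ρ` at the base point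
`1 - z`, evaluated at `1`. As a function of its base point `t`, a Taylor polynomial evaluated at `x`
has derivative `(x - t)^n / n! · ρ⁽ⁿ⁺¹⁾(t)`, which is nonnegative for `0 ≤ t ≤ 1` because every
derivative of a polynomial with nonnegative coefficients is nonnegative on `[0, ∞)`. So the Taylor
sum decreases in `z` and `g` increases.
-/

open Finset Set

theorem sum_pow_div_factorial_mul_iteratedDeriv_sub_eq_taylorWithinEval (f : ℝ → ℝ) (n : ℕ)
    (x z : ℝ) :
    ∑ i ∈ range (n + 1), z ^ i / (i.factorial : ℝ) * iteratedDeriv i f (x - z) =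
      taylorWithinEval f n univ (x - z) x := by
  rw [taylor_within_apply, sub_sub_cancel]
  refine sum_congr rfl fun i _ => ?_
  rw [iteratedDerivWithin_univ, smul_eq_mul, div_eq_inv_mul]

theorem hasDerivAt_taylorWithinEval_univ_basepoint {f : ℝ → ℝ} {n : ℕ}
    (hf : ContDiff ℝ (n + 1) f) (x t : ℝ) :
    HasDerivAt (fun t => taylorWithinEval f n univ t x)
      ((n.factorial : ℝ)⁻¹ * (x - t) ^ n * iteratedDeriv (n + 1) f t) t := by
  have hdiff : DifferentiableWithinAt ℝ (iteratedDerivWithin n f univ) univ t := by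
    rw [iteratedDerivWithin_univ]
    exact (hf.differentiable_iteratedDeriv' n t).differentiableWithinAt
  have h := hasDerivWithinAt_taylorWithinEval (x := x) uniqueDiffOn_univ Filter.univ_mem
    (mem_univ t) subset_rfl hf.of_succ.contDiffOn hdiff
  rwa [hasDerivWithinAt_univ, iteratedDerivWithin_univ, smul_eq_mul] at h

theorem monotoneOn_taylorWithinEval_univ_basepoint {f : ℝ → ℝ} {n : ℕ} {a x : ℝ}
    (hf : ContDiff ℝ (n + 1) f) (hf' : ∀ t ∈ Icc a x, 0 ≤ iteratedDeriv (n + 1) f t) :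
    MonotoneOn (fun t => taylorWithinEval f n univ t x) (Icc a x) := by
  have hderiv := hasDerivAt_taylorWithinEval_univ_basepoint hf x
  refine monotoneOn_of_hasDerivWithinAt_nonneg (convex_Icc a x)
    (fun t _ => (hderiv t).continuousAt.continuousWithinAt)
    (fun t _ => (hderiv t).hasDerivWithinAt) fun t ht => ?_
  have ht' : t ∈ Icc a x := interior_subset ht
  have hxt : 0 ≤ x - t := sub_nonneg.2 ht'.2
  have := hf' t ht'
  positivity

theorem iteratedDeriv_sum_mul_pow_nonneg {ι : Type*} (s : Finset ι) {c : ι → ℝ} (m : ι → ℕ)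
    (hc : ∀ i ∈ s, 0 ≤ c i) (k : ℕ) {t : ℝ} (ht : 0 ≤ t) :
    0 ≤ iteratedDeriv k (fun x => ∑ i ∈ s, c i * x ^ m i) t := by
  rw [iteratedDeriv_fun_sum fun i _ => by fun_prop]
  refine sum_nonneg fun i hi => ?_
  rw [iteratedDeriv_const_mul_field, iteratedDeriv_pow]
  have := hc i hi
  positivity

theorem g_monotoneOn_general (e N : ℕ) (he : 1 ≤ e) (r : ℕ → ℝ)
    (hr : ∀ j, 0 ≤ r j) :
    MonotoneOn
      (fun z : ℝ => 1 - ∑ i ∈ Finset.range e,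
        z ^ i / (Nat.factorial i : ℝ) *
          iteratedDeriv i (fun x : ℝ => ∑ j ∈ Finset.Icc 1 N, r j * x ^ (j - 1)) (1 - z))
      (Set.Icc 0 1) := by
  obtain ⟨n, rfl⟩ : ∃ n, e = n + 1 := ⟨e - 1, by omega⟩
  set ρ : ℝ → ℝ := fun x => ∑ j ∈ Finset.Icc 1 N, r j * x ^ (j - 1)
  have hρ : ContDiff ℝ (n + 1) ρ := by fun_prop
  have hT : MonotoneOn (fun t => taylorWithinEval ρ n univ t 1) (Icc 0 1) :=
    monotoneOn_taylorWithinEval_univ_basepoint hρ fun t ht =>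
      iteratedDeriv_sum_mul_pow_nonneg _ _ (fun j _ => hr j) _ ht.1
  have hg : (fun z : ℝ => 1 - ∑ i ∈ range (n + 1), z ^ i / (i.factorial : ℝ) *
      iteratedDeriv i ρ (1 - z)) = fun z => 1 - taylorWithinEval ρ n univ (1 - z) 1 :=
    funext fun z => by rw [sum_pow_div_factorial_mul_iteratedDeriv_sub_eq_taylorWithinEval]
  rw [hg]
  intro z hz w hw hzw
  exact sub_le_sub_left (hT ⟨sub_nonneg.2 hw.2, by linarith [hw.1]⟩
    ⟨sub_nonneg.2 hz.2, by linarith [hz.1]⟩ (sub_le_sub_left hzw 1)) 1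

/-- The function `g(z) = 1 - ∑_{i=0}^{e-1} (z^i / i!) ρ⁽ⁱ⁾(1-z)` of Lemma 1,
where `ρ(x) = ∑_{j=1}^N ρ_j x^(j-1)` has nonnegative coefficients summing to one
and `e ≥ 1`, is monotonically nondecreasing on `[0,1]`. -/
theorem g_monotoneOn (e N : ℕ) (he : 1 ≤ e) (r : ℕ → ℝ)
    (hr : ∀ j, 0 ≤ r j) (hsum : ∑ j ∈ Finset.Icc 1 N, r j = 1) :
    MonotoneOn
      (fun z : ℝ => 1 - ∑ i ∈ Finset.range e,
        z ^ i / (Nat.factorial i : ℝ) *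
          iteratedDeriv i (fun x : ℝ => ∑ j ∈ Finset.Icc 1 N, r j * x ^ (j - 1)) (1 - z))
      (Set.Icc 0 1) :=
  g_monotoneOn_general e N he r hr
end

section
/- Let $L\ge 1$, let $A$ be an $L\times L$ real matrix, let $p_e\in[0,1]$, let $g:\mathbb{R}\to\mathbb{R}$ be differentiable and $f(\cdot;p_e):\mathbb{R}\to\mathbb{R}$ be continuous. For $\mathbf{z}\in\mathbb{R}^L$ write $\mathbf{g}(\mathbf{z})$ and $\mathbf{f}(\mathbf{z};p_e)$ for the componentwise applications of $g$ and $f$, and define the potential function $U(\mathbf{z};p_e)=\mathbf{g}(\mathbf{z})^\top\mathbf{z}-\sum_{\ell=1}^{L}\int_0^{z_\ell} g(u)\,du-\sum_{\ell=1}^{L}\int_0^{(A\mathbf{g}(\mathbf{z}))_\ell} f(u;p_e)\,du$. Then $U(\cdot;p_e)$ is differentiable and its gradient satisfies, for each $\ell$, $\frac{\partial U}{\partial z_\ell}(\mathbf{z};p_e)=g'(z_\ell)\,\Big(z_\ell-\big(A^\top \mathbf{f}(A\mathbf{g}(\mathbf{z});p_e)\big)_\ell\Big)$. -/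
/-! Along the coordinate line `s ↦ update z ℓ s` only the `ℓ`-th summand of each separable sum
varies, so the first two sums contribute `g'(z_ℓ) z_ℓ + g(z_ℓ) - g(z_ℓ)`. In the coupling term the
`m`-th argument is the affine function `(A g(z))_m + A_{mℓ} (g(s) - g(z_ℓ))`, and the fundamental
theorem of calculus with the chain rule turns the sum of primitives of `f` into
`g'(z_ℓ) (Aᵀ f(A g(z)))_ℓ`. -/

open Function Matrix

section PartialDerivatives

variable {𝕜 ι : Type*} [NontriviallyNormedField 𝕜] [Fintype ι] [DecidableEq ι]

theorem hasDerivAt_sum_comp_update {F : Type*} [NormedAddCommGroup F] [NormedSpace 𝕜 F]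
    {φ : 𝕜 → F} {φ' : F} (z : ι → 𝕜) (ℓ : ι) (hφ : HasDerivAt φ φ' (z ℓ)) :
    HasDerivAt (fun s => ∑ m, φ (update z ℓ s m)) φ' (z ℓ) := by
  have hsplit : (fun s => ∑ m, φ (update z ℓ s m))
      = fun s => φ s + ∑ m ∈ Finset.univ \ {ℓ}, φ (z m) := by
    funext s
    have := Finset.sum_update_of_mem (Finset.mem_univ ℓ) (φ ∘ z) (φ s)
    rwa [← comp_update] at this
  rw [hsplit]
  exact hφ.add_const _

theorem Matrix.mulVec_update_apply {R m n : Type*} [CommRing R] [Fintype n] [DecidableEq n]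
    (A : Matrix m n R) (w : n → R) (ℓ : n) (c : R) (i : m) :
    (A *ᵥ update w ℓ c) i = (A *ᵥ w) i + A i ℓ * (c - w ℓ) := by
  simp only [Pi.update_eq_sub_add_single, mulVec_add, mulVec_sub, mulVec_single, op_smul_eq_smul,
    Pi.add_apply, Pi.sub_apply, Pi.smul_apply, col_apply, smul_eq_mul]
  ring

theorem hasDerivAt_sum_comp_mulVec_update {Φ φ : 𝕜 → 𝕜} (hΦ : ∀ x, HasDerivAt Φ (φ x) x)
    (A : Matrix ι ι 𝕜) (w : ι → 𝕜) (ℓ : ι) :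
    HasDerivAt (fun c => ∑ m, Φ ((A *ᵥ update w ℓ c) m))
      ((Aᵀ *ᵥ fun m => φ ((A *ᵥ w) m)) ℓ) (w ℓ) := by
  simp only [Matrix.mulVec_update_apply]
  have hterm : ∀ m, HasDerivAt (fun c => Φ ((A *ᵥ w) m + A m ℓ * (c - w ℓ)))
      (φ ((A *ᵥ w) m) * A m ℓ) (w ℓ) := by
    intro m
    have hinner := ((hasDerivAt_id' (w ℓ)).sub_const (w ℓ)).const_mul (A m ℓ) |>.const_add
      ((A *ᵥ w) m)
    have h := (hΦ ((A *ᵥ w) m)).comp_of_eq (w ℓ) hinner (by simp)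
    rwa [mul_one] at h
  have htranspose : (Aᵀ *ᵥ fun m => φ ((A *ᵥ w) m)) ℓ = ∑ m, φ ((A *ᵥ w) m) * A m ℓ := by
    simp [Matrix.mulVec, dotProduct, mul_comm]
  rw [htranspose]
  exact HasDerivAt.fun_sum fun m _ => hterm m

end PartialDerivatives

theorem coupled_potential_gradient_general (L : ℕ)
    (A : Matrix (Fin L) (Fin L) ℝ)
    (g f : ℝ → ℝ) (hg : Differentiable ℝ g) (hf : Continuous f) :
    let U : (Fin L → ℝ) → ℝ := fun zv =>
      (∑ ℓ, g (zv ℓ) * zv ℓ) - (∑ ℓ, ∫ u in (0 : ℝ)..(zv ℓ), g u)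
        - ∑ ℓ, ∫ u in (0 : ℝ)..(A.mulVec (fun m => g (zv m)) ℓ), f u
    Differentiable ℝ U ∧ ∀ (zv : Fin L → ℝ) (ℓ : Fin L),
      deriv (fun s : ℝ => U (Function.update zv ℓ s)) (zv ℓ)
        = deriv g (zv ℓ) *
            (zv ℓ - A.transpose.mulVec (fun m => f (A.mulVec (fun m' => g (zv m')) m)) ℓ) := by
  intro U
  have hG : ∀ x, HasDerivAt (fun y => ∫ u in (0 : ℝ)..y, g u) (g x) x := fun x =>
    (hg.continuous.integral_hasStrictDerivAt 0 x).hasDerivAt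
  have hF : ∀ x, HasDerivAt (fun y => ∫ u in (0 : ℝ)..y, f u) (f x) x := fun x =>
    (hf.integral_hasStrictDerivAt 0 x).hasDerivAt
  refine ⟨?_, fun zv ℓ => ?_⟩
  · have hGd : Differentiable ℝ fun y => ∫ u in (0 : ℝ)..y, g u := fun x => (hG x).differentiableAt
    have hFd : Differentiable ℝ fun y => ∫ u in (0 : ℝ)..y, f u := fun x => (hF x).differentiableAt
    simp only [U, Matrix.mulVec, dotProduct]
    fun_prop
  · have hupd : ∀ s, (fun k => g (update zv ℓ s k)) = update (fun k => g (zv k)) ℓ (g s) :=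
      fun s => comp_update g zv ℓ s
    have hg' := (hg (zv ℓ)).hasDerivAt
    have hself := (hasDerivAt_sum_comp_update zv ℓ (hg'.fun_mul (hasDerivAt_id' (zv ℓ)))).fun_sub
      (hasDerivAt_sum_comp_update zv ℓ (hG (zv ℓ)))
    have hcoupling :=
      (hasDerivAt_sum_comp_mulVec_update hF A (fun k => g (zv k)) ℓ).comp (zv ℓ) hg'
    simp only [U, hupd]
    refine (hself.fun_sub hcoupling).deriv.trans ?_
    ring

/-- The coupled potential function
`U(z; p_e) = g(z)ᵀ z - ∑_ℓ ∫_0^{z_ℓ} g(u) du - ∑_ℓ ∫_0^{(A g(z))_ℓ} f(u; p_e) du`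
is differentiable, with partial derivatives
`∂U/∂z_ℓ = g'(z_ℓ) (z_ℓ - (Aᵀ f(A g(z); p_e))_ℓ)`,
whenever `g` is differentiable and `f(·; p_e)` is continuous. -/
theorem coupled_potential_gradient (L : ℕ) (hL : 1 ≤ L)
    (A : Matrix (Fin L) (Fin L) ℝ) (pe : ℝ) (hpe : pe ∈ Set.Icc (0 : ℝ) 1)
    (g f : ℝ → ℝ) (hg : Differentiable ℝ g) (hf : Continuous f) :
    let U : (Fin L → ℝ) → ℝ := fun zv =>
      (∑ ℓ, g (zv ℓ) * zv ℓ) - (∑ ℓ, ∫ u in (0 : ℝ)..(zv ℓ), g u)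
        - ∑ ℓ, ∫ u in (0 : ℝ)..(A.mulVec (fun m => g (zv m)) ℓ), f u
    Differentiable ℝ U ∧ ∀ (zv : Fin L → ℝ) (ℓ : Fin L),
      deriv (fun s : ℝ => U (Function.update zv ℓ s)) (zv ℓ)
        = deriv g (zv ℓ) *
            (zv ℓ - A.transpose.mulVec (fun m => f (A.mulVec (fun m' => g (zv m')) m)) ℓ) :=
  coupled_potential_gradient_general L A g f hg hf
end
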